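/- arXiv:2005.05779 — 8 statements merged into one kernel-verified Lean document; each statement's English description precedes it below -/
import Mathlib

section
/- For p ∈ (0,1) and k ≥ 1, Tie(k+1,p) < Tie(k,p), i.e., the tie probability of two i.i.d. binomial(k,p) variables is strictly decreasing in k. -/
/-- Probability that two i.i.d. binomial(k,p) random variables are equal. -/
noncomputable def Tie (k : ℕ) (p : ℝ) : ℝ :=
  ∑ j ∈ Finset.range (k+1), ((k.choose j : ℝ) * p ^ j * (1 - p) ^ (k - j))^2

theorem stmt_3 (k : ℕ) (hk : 1 ≤ k) (p : ℝ) (hp : p ∈ Set.Ioo (0:ℝ) 1) :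
    Tie (k+1) p < Tie k p := by
  obtain ⟨hp0, hp1⟩ := hp
  have hq0 : (0:ℝ) < 1 - p := by linarith
  set a : ℕ → ℝ := fun j => (k.choose j : ℝ) * p ^ j * (1 - p) ^ (k - j) with ha
  set T : ℝ := ∑ j ∈ Finset.range (k+1), (a j)^2 with hTdef
  set S : ℝ := ∑ i ∈ Finset.range (k+1), a (i+1) * a i with hSdef
  have hTk : Tie k p = T := rfl
  have hatop : a (k+1) = 0 := by
    simp [ha, Nat.choose_eq_zero_of_lt]
  have hb : ∀ i ∈ Finset.range (k+1),
      (((k+1).choose (i+1) : ℝ) * p ^ (i+1) * (1-p) ^ (k+1-(i+1)))^2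
      = ((1-p) * a (i+1) + p * a i)^2 := by
    intro i hi
    rw [Finset.mem_range] at hi
    have hik : i ≤ k := Nat.lt_succ_iff.mp hi
    congr 1
    have hch : (((k+1).choose (i+1) : ℕ) : ℝ) = (k.choose (i+1) : ℝ) + (k.choose i : ℝ) := by
      rw [Nat.choose_succ_succ]; push_cast; ring
    have h1 : (k+1) - (i+1) = k - i := by omega
    rw [hch, h1]
    simp only [ha]
    rcases Nat.lt_or_ge i k with h | h
    · have h2 : k - i = (k - (i+1)) + 1 := by omega
      rw [h2]; ring
    · have hik' : i = k := le_antisymm hik h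
      subst hik'
      simp [Nat.choose_eq_zero_of_lt]
      ring
  have hshift : ∑ i ∈ Finset.range (k+1), (a (i+1))^2 = T - (a 0)^2 := by
    have h1 : ∑ j ∈ Finset.range (k+2), (a j)^2
        = ∑ i ∈ Finset.range (k+1), (a (i+1))^2 + (a 0)^2 :=
      Finset.sum_range_succ' _ _
    have h2 : ∑ j ∈ Finset.range (k+2), (a j)^2 = T + (a (k+1))^2 :=
      Finset.sum_range_succ _ _
    rw [hatop] at h2
    simp at h2
    linarith
  have hTie1 : Tie (k+1) p = (p^2 + (1-p)^2) * T + 2*p*(1-p)*S := by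
    show ∑ j ∈ Finset.range (k+1+1), (((k+1).choose j : ℝ) * p ^ j * (1-p) ^ (k+1-j))^2 = _
    rw [Finset.sum_range_succ' (fun j => (((k+1).choose j : ℝ) * p ^ j * (1-p) ^ (k+1-j))^2)]
    rw [Finset.sum_congr rfl hb]
    have hexp : ∑ i ∈ Finset.range (k+1), ((1-p) * a (i+1) + p * a i)^2
        = (1-p)^2 * (∑ i ∈ Finset.range (k+1), (a (i+1))^2)
          + 2*p*(1-p) * S + p^2 * T := by
      rw [hSdef, hTdef, Finset.mul_sum, Finset.mul_sum, Finset.mul_sum,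
        ← Finset.sum_add_distrib, ← Finset.sum_add_distrib]
      apply Finset.sum_congr rfl
      intro i _
      ring
    rw [hexp, hshift]
    have hb0 : (((k+1).choose 0 : ℝ) * p ^ 0 * (1-p) ^ (k+1-0))^2 = (1-p)^2 * (a 0)^2 := by
      simp [ha]
      ring
    rw [hb0]
    ring
  have ha0 : a 0 = (1-p)^k := by simp [ha]
  have ha0pos : 0 < (a 0)^2 := by
    rw [ha0]
    positivity
  have hST : S < T := by
    have hle : ∑ i ∈ Finset.range (k+1), a (i+1) * a i
        ≤ ∑ i ∈ Finset.range (k+1), ((a (i+1))^2 + (a i)^2)/2 := by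
      apply Finset.sum_le_sum
      intro i _
      nlinarith [sq_nonneg (a (i+1) - a i)]
    have hsum : ∑ i ∈ Finset.range (k+1), ((a (i+1))^2 + (a i)^2)/2
        = ((T - (a 0)^2) + T)/2 := by
      rw [← Finset.sum_div, Finset.sum_add_distrib, hshift]
    rw [hsum] at hle
    rw [hSdef]
    linarith
  rw [hTie1, hTk]
  nlinarith [mul_pos (mul_pos hp0 hq0) (sub_pos.mpr hST)]
end

section
/- For fixed p ∈ (0,1), Tie(k,p) → 0 as k → ∞. -/
/-!
Pascal's rule writes the binomial weights `b (k+1)` as `(1-p) b k + p S(b k)`, where `S` shifts a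
sequence one step to the right, hence `Tie (k+1) = Tie k - p(1-p) ‖b k - S(b k)‖²`. Now
`Tie k ≤ max (b k)`, and the maximum is at most half the total variation `‖b k - S(b k)‖₁`, so
Cauchy–Schwarz over the `k+2` indices gives `Tie (k+1) ≤ Tie k - 4p(1-p) Tie k² / (k+2)`. A
nonnegative sequence whose decrements dominate `w k · Tie k²` with `∑ w k = ∞` must tend to `0`.
-/

open Finset Filter Topology

theorem tendsto_zero_of_le_sub_mul_sq {a w : ℕ → ℝ} (ha : ∀ k, 0 ≤ a k) (hw : ∀ k, 0 ≤ w k)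
    (hw_sum : ¬Summable w) (hrec : ∀ k, a (k + 1) ≤ a k - w k * a k ^ 2) :
    Tendsto a atTop (𝓝 0) := by
  have hanti : Antitone a :=
    antitone_nat_of_succ_le fun k => (hrec k).trans (by nlinarith [hw k, sq_nonneg (a k)])
  have hbdd : BddBelow (Set.range a) := ⟨0, by rintro _ ⟨k, rfl⟩; exact ha k⟩
  have hlim := tendsto_atTop_ciInf hanti hbdd
  have hL : ∀ k, ⨅ i, a i ≤ a k := ciInf_le hbdd
  suffices ⨅ i, a i = 0 by rwa [this] at hlim
  by_contra hL0
  have hpos : 0 < (⨅ i, a i) ^ 2 := pow_pos ((le_ciInf ha).lt_of_ne' hL0) 2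
  have hdec : Summable fun k => w k * a k ^ 2 := by
    refine summable_of_sum_range_le (c := a 0) (fun k => mul_nonneg (hw k) (sq_nonneg _))
      fun n => ?_
    have : ∑ k ∈ range n, w k * a k ^ 2 ≤ a 0 - a n := by
      induction n with
      | zero => simp
      | succ n ih => rw [sum_range_succ]; linarith [hrec n]
    linarith [ha n]
  exact hw_sum <| (summable_mul_right_iff hpos.ne').mp <|
    hdec.of_nonneg_of_le (fun k => mul_nonneg (hw k) hpos.le) fun k =>
      mul_le_mul_of_nonneg_left (pow_le_pow_left₀ (le_ciInf ha) (hL k) 2) (hw k)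

def shiftSeq (f : ℕ → ℝ) : ℕ → ℝ
  | 0 => 0
  | j + 1 => f j

section shiftSeq

variable (f : ℕ → ℝ)

theorem sum_range_sub_shiftSeq (n : ℕ) : ∑ j ∈ range (n + 1), (f j - shiftSeq f j) = f n := by
  induction n with
  | zero => simp [shiftSeq]
  | succ n ih => rw [sum_range_succ, ih, shiftSeq]; ring

theorem sum_range_succ_sq_shiftSeq (n : ℕ) :
    ∑ j ∈ range (n + 1), shiftSeq f j ^ 2 = ∑ j ∈ range n, f j ^ 2 := by
  simp [sum_range_succ', shiftSeq]

variable {f}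

theorem two_mul_abs_le_sum_abs_sub_shiftSeq {m n : ℕ} (hmn : m < n) (hn : f n = 0) :
    2 * |f m| ≤ ∑ j ∈ range (n + 1), |f j - shiftSeq f j| := by
  have htail : ∑ j ∈ Ico (m + 1) (n + 1), (f j - shiftSeq f j) = -f m := by
    have := sum_range_add_sum_Ico (fun j => f j - shiftSeq f j) (show m + 1 ≤ n + 1 by omega)
    rw [sum_range_sub_shiftSeq, sum_range_sub_shiftSeq, hn] at this
    linarith
  rw [← sum_range_add_sum_Ico _ (show m + 1 ≤ n + 1 by omega), two_mul]
  gcongr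
  · exact sum_range_sub_shiftSeq f m ▸ abs_sum_le_sum_abs _ _
  · exact (abs_neg (f m)).symm.trans_le (htail ▸ abs_sum_le_sum_abs _ _)

theorem sum_sq_convex_shiftSeq (t : ℝ) {n : ℕ} (hn : f n = 0) :
    ∑ j ∈ range (n + 1), ((1 - t) * f j + t * shiftSeq f j) ^ 2 =
      ∑ j ∈ range n, f j ^ 2 - t * (1 - t) * ∑ j ∈ range (n + 1), (f j - shiftSeq f j) ^ 2 := by
  have hpt : ∀ j, ((1 - t) * f j + t * shiftSeq f j) ^ 2 = (1 - t) * f j ^ 2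
      + t * shiftSeq f j ^ 2 - t * (1 - t) * (f j - shiftSeq f j) ^ 2 := fun j => by ring
  have hf : ∑ j ∈ range (n + 1), f j ^ 2 = ∑ j ∈ range n, f j ^ 2 := by simp [sum_range_succ, hn]
  simp only [hpt, sum_sub_distrib, sum_add_distrib, ← mul_sum, sum_range_succ_sq_shiftSeq, hf]
  ring

end shiftSeq

theorem sum_sq_le_of_sum_eq_one {ι : Type*} {s : Finset ι} {a : ι → ℝ} {M : ℝ}
    (ha : ∀ j ∈ s, 0 ≤ a j) (hsum : ∑ j ∈ s, a j = 1) (hM : ∀ j ∈ s, a j ≤ M) :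
    ∑ j ∈ s, a j ^ 2 ≤ M :=
  calc ∑ j ∈ s, a j ^ 2 ≤ ∑ j ∈ s, M * a j :=
        sum_le_sum fun j hj => by rw [sq]; exact mul_le_mul_of_nonneg_right (hM j hj) (ha j hj)
    _ = M := by rw [← mul_sum, hsum, mul_one]

noncomputable def binomTerm (p : ℝ) (k j : ℕ) : ℝ :=
  k.choose j * p ^ j * (1 - p) ^ (k - j)

section binomTerm

variable {p : ℝ} {k j : ℕ}

theorem tie_eq_sum_sq : Tie k p = ∑ j ∈ range (k + 1), binomTerm p k j ^ 2 := rfl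

theorem binomTerm_of_lt (h : k < j) : binomTerm p k j = 0 := by
  simp [binomTerm, Nat.choose_eq_zero_of_lt h]

theorem binomTerm_nonneg (h0 : 0 ≤ p) (h1 : p ≤ 1) : 0 ≤ binomTerm p k j := by
  have : 0 ≤ 1 - p := by linarith
  unfold binomTerm; positivity

theorem sum_binomTerm : ∑ j ∈ range (k + 1), binomTerm p k j = 1 := by
  have := (add_pow p (1 - p) k).symm
  rw [add_sub_cancel, one_pow] at this
  rw [← this]
  exact sum_congr rfl fun j _ => by rw [binomTerm]; ring

theorem binomTerm_succ (p : ℝ) (k j : ℕ) :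
    binomTerm p (k + 1) j = (1 - p) * binomTerm p k j + p * shiftSeq (binomTerm p k) j := by
  rcases j with _ | j
  · simp [binomTerm, shiftSeq, pow_succ]; ring
  rcases lt_trichotomy j k with h | rfl | h
  · obtain ⟨i, rfl⟩ := Nat.exists_eq_add_of_lt h
    simp only [binomTerm, shiftSeq, Nat.choose_succ_succ,
      show j + i + 1 + 1 - (j + 1) = i + 1 by omega, show j + i + 1 - (j + 1) = i by omega, show j + i + 1 - j = i + 1 by omega]
    push_cast; ring
  · simp [binomTerm, shiftSeq, pow_succ]; ring
  · rw [binomTerm_of_lt (by omega), binomTerm_of_lt (by omega), shiftSeq, binomTerm_of_lt h]; ring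

theorem tie_succ (p : ℝ) (k : ℕ) :
    Tie (k + 1) p = Tie k p - p * (1 - p) *
      ∑ j ∈ range (k + 2), (binomTerm p k j - shiftSeq (binomTerm p k) j) ^ 2 := by
  simp only [tie_eq_sum_sq, binomTerm_succ]
  exact sum_sq_convex_shiftSeq p (binomTerm_of_lt k.lt_succ_self)

theorem sq_tie_le (h0 : 0 ≤ p) (h1 : p ≤ 1) (k : ℕ) :
    4 * Tie k p ^ 2 ≤ (k + 2) *
      ∑ j ∈ range (k + 2), (binomTerm p k j - shiftSeq (binomTerm p k) j) ^ 2 := by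
  obtain ⟨m, hm, hmax⟩ := exists_max_image (range (k + 1)) (binomTerm p k) nonempty_range_add_one
  have htie : Tie k p ≤ binomTerm p k m :=
    sum_sq_le_of_sum_eq_one (fun _ _ => binomTerm_nonneg h0 h1) sum_binomTerm hmax
  have hvar : 2 * binomTerm p k m ≤
      ∑ j ∈ range (k + 2), |binomTerm p k j - shiftSeq (binomTerm p k) j| := by
    rw [← abs_of_nonneg (binomTerm_nonneg h0 h1 (k := k) (j := m))]
    exact two_mul_abs_le_sum_abs_sub_shiftSeq (by simpa using hm) (binomTerm_of_lt k.lt_succ_self)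
  have hcs := sq_sum_le_card_mul_sum_sq (s := range (k + 2))
    (f := fun j => |binomTerm p k j - shiftSeq (binomTerm p k) j|)
  simp only [card_range, sq_abs] at hcs
  calc 4 * Tie k p ^ 2 = (2 * Tie k p) ^ 2 := by ring
    _ ≤ (∑ j ∈ range (k + 2), |binomTerm p k j - shiftSeq (binomTerm p k) j|) ^ 2 := by
        gcongr
        · exact mul_nonneg zero_le_two (sum_nonneg fun _ _ => sq_nonneg _)
        · linarith
    _ ≤ _ := by exact_mod_cast hcs

theorem tie_succ_le (h0 : 0 ≤ p) (h1 : p ≤ 1) (k : ℕ) :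
    Tie (k + 1) p ≤ Tie k p - 4 * p * (1 - p) / (k + 2) * Tie k p ^ 2 := by
  have hpq : 0 ≤ p * (1 - p) := mul_nonneg h0 (by linarith)
  have := mul_le_mul_of_nonneg_left (sq_tie_le h0 h1 k) hpq
  rw [tie_succ, sub_le_sub_iff_left, div_mul_eq_mul_div, div_le_iff₀ (by positivity)]
  linarith

end binomTerm

theorem stmt_4 (p : ℝ) (hp : p ∈ Set.Ioo (0:ℝ) 1) :
    Filter.Tendsto (fun k => Tie k p) Filter.atTop (nhds 0) := by
  obtain ⟨h0, h1⟩ := hp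
  have hpq : 0 < 4 * p * (1 - p) := by nlinarith
  refine tendsto_zero_of_le_sub_mul_sq (w := fun k : ℕ => 4 * p * (1 - p) / (k + 2))
    (fun _ => sum_nonneg fun _ _ => sq_nonneg _) (fun _ => by positivity) ?_
    (tie_succ_le h0.le h1.le)
  simp_rw [div_eq_mul_one_div (4 * p * (1 - p)), summable_mul_left_iff hpq.ne']
  exact_mod_cast mt (summable_nat_add_iff 2).mp Real.not_summable_one_div_natCast
end

section
/- For each fixed k ≥ 1, the function p ↦ Tie(k,p) is convex on [0,1]. -/
open Finset Complex

lemma sum_zpow_eq_zero {n : ℕ} (hn : n ≠ 0) (d : ℤ) (hd : ¬ ((n:ℤ) ∣ d)) :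
    ∑ m ∈ range n, (Complex.exp (2 * Real.pi * I / n) ^ d) ^ m = 0 := by
  have hζ := Complex.isPrimitiveRoot_exp n hn
  have hz1 : Complex.exp (2 * Real.pi * I / n) ^ d ≠ 1 := by
    intro h; exact hd ((hζ.zpow_eq_one_iff_dvd d).1 h)
  have hzn : (Complex.exp (2 * Real.pi * I / n) ^ d) ^ n = 1 := by
    rw [← zpow_natCast (Complex.exp (2 * Real.pi * I / n) ^ d), ← zpow_mul, mul_comm d (n:ℤ),
      zpow_mul, zpow_natCast, hζ.pow_eq_one, one_zpow]
  rw [geom_sum_eq hz1, hzn, sub_self, zero_div]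

lemma tie_eq (k : ℕ) (p : ℝ) :
    ((k:ℝ)+1) * Tie k p = ∑ m ∈ range (k+1),
      (1 - 2*p*(1-p)*(1 - Real.cos (2*Real.pi*m/((k:ℝ)+1))))^k := by
  set n : ℕ := k + 1 with hn
  have hn0 : n ≠ 0 := Nat.succ_ne_zero k
  set ζ : ℂ := Complex.exp (2 * Real.pi * I / n) with hζdef
  have hζ0 : ζ ≠ 0 := Complex.exp_ne_zero _
  set x : ℂ := 1 - (p:ℂ) with hx
  set y : ℂ := (p:ℂ) with hy
  -- Step A: pointwise product formula
  have stepA : ∀ m : ℕ, (x + y * ζ^m) * (x + y * (ζ^m)⁻¹)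
      = ((1 - 2*p*(1-p)*(1 - Real.cos (2*Real.pi*m/((k:ℝ)+1))) : ℝ) : ℂ) := by
    intro m
    have hθ : (ζ:ℂ)^m = Complex.exp ((((2*Real.pi*m/((k:ℝ)+1)) : ℝ) : ℂ) * I) := by
      rw [hζdef, ← Complex.exp_nat_mul]
      congr 1
      have : ((n:ℂ)) ≠ 0 := Nat.cast_ne_zero.mpr hn0
      push_cast [hn]
      field_simp
    have hθinv : ((ζ:ℂ)^m)⁻¹ = Complex.exp (-((((2*Real.pi*m/((k:ℝ)+1)) : ℝ) : ℂ) * I)) := by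
      rw [hθ, ← Complex.exp_neg]
    set θ : ℝ := 2*Real.pi*m/((k:ℝ)+1)
    rw [hθ, ← Complex.exp_neg, ← neg_mul, Complex.exp_mul_I, Complex.exp_mul_I,
      Complex.cos_neg, Complex.sin_neg]
    push_cast [Complex.ofReal_cos]
    linear_combination y^2 * Complex.sin_sq_add_cos_sq (θ:ℂ)
      - y^2 * Complex.sin (θ:ℂ)^2 * Complex.I_sq
  have expand : ∀ z : ℂ, (x + y*z)^k
      = ∑ a ∈ range n, y^a * z^a * x^(k-a) * (k.choose a : ℂ) := by
    intro z
    rw [add_comm x (y*z), add_pow]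
    exact Finset.sum_congr rfl fun a _ => by ring
  have key : ∑ m ∈ range n, ((x + y*ζ^m) * (x + y*(ζ^m)⁻¹))^k
      = (n:ℂ) * ∑ a ∈ range n, ((k.choose a : ℂ) * y^a * x^(k-a))^2 := by
    have hzpow : ∀ (m a b : ℕ), (ζ^m)^a * ((ζ^m)⁻¹)^b = (ζ^((a:ℤ) - b))^m := by
      intro m a b
      rw [← zpow_natCast (ζ^((a:ℤ)-b)) m, ← zpow_mul, sub_mul, zpow_sub₀ hζ0]
      rw [inv_pow, ← pow_mul, ← pow_mul]
      have h1 : ζ^((a:ℤ)*m) = ζ^(m*a) := by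
        rw [← zpow_natCast ζ (m*a)]; congr 1; push_cast; ring
      have h2 : ζ^((b:ℤ)*m) = ζ^(m*b) := by
        rw [← zpow_natCast ζ (m*b)]; congr 1; push_cast; ring
      rw [h1, h2, div_eq_mul_inv]
    calc ∑ m ∈ range n, ((x + y*ζ^m) * (x + y*(ζ^m)⁻¹))^k
        = ∑ m ∈ range n, ∑ a ∈ range n, ∑ b ∈ range n,
            ((y^a * x^(k-a) * (k.choose a:ℂ)) * (y^b * x^(k-b) * (k.choose b:ℂ)))
            * ((ζ^((a:ℤ) - b))^m) := by
          refine Finset.sum_congr rfl fun m _ => ?_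
          rw [mul_pow, expand (ζ^m), expand ((ζ^m)⁻¹), Finset.sum_mul_sum]
          refine Finset.sum_congr rfl fun a ha => Finset.sum_congr rfl fun b hb => ?_
          linear_combination (y^a * x^(k-a) * (k.choose a:ℂ) * (y^b * x^(k-b) * (k.choose b:ℂ))) * hzpow m a b
      _ = ∑ a ∈ range n, ∑ b ∈ range n,
            ((y^a * x^(k-a) * (k.choose a:ℂ)) * (y^b * x^(k-b) * (k.choose b:ℂ)))
            * ∑ m ∈ range n, (ζ^((a:ℤ) - b))^m := by
          simp_rw [Finset.mul_sum]
          rw [Finset.sum_comm]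
          exact Finset.sum_congr rfl fun a _ => Finset.sum_comm
      _ = ∑ a ∈ range n, ((y^a * x^(k-a) * (k.choose a:ℂ)) * (y^a * x^(k-a) * (k.choose a:ℂ))) * n := by
          refine Finset.sum_congr rfl fun a ha => ?_
          rw [Finset.sum_eq_single a]
          · simp
          · intro b hb hne
            have ha' := Finset.mem_range.1 ha
            have hb' := Finset.mem_range.1 hb
            have hnd : ¬((n:ℤ) ∣ ((a:ℤ) - b)) := by
              intro hdvd
              have h0 : ((a:ℤ) - b) ≠ 0 := by
                intro h; apply hne; omega
              have hge := Int.le_of_dvd (abs_pos.2 h0) ((dvd_abs _ _).2 hdvd)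
              have hlt : |((a:ℤ) - b)| < n := by
                rw [abs_lt]; omega
              omega
            rw [sum_zpow_eq_zero hn0 _ hnd, mul_zero]
          · intro h; exact absurd ha h
      _ = (n:ℂ) * ∑ a ∈ range n, ((k.choose a : ℂ) * y^a * x^(k-a))^2 := by
          rw [Finset.mul_sum]
          exact Finset.sum_congr rfl fun a _ => by ring
  have final : ((((k:ℝ)+1) * Tie k p : ℝ) : ℂ)
      = ((∑ m ∈ range (k+1), (1 - 2*p*(1-p)*(1 - Real.cos (2*Real.pi*m/((k:ℝ)+1))))^k : ℝ) : ℂ) := by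
    rw [Complex.ofReal_mul, Complex.ofReal_sum]
    have hTie : ((Tie k p : ℝ) : ℂ) = ∑ a ∈ range n, ((k.choose a : ℂ) * y^a * x^(k-a))^2 := by
      rw [Tie, Complex.ofReal_sum]
      exact Finset.sum_congr rfl fun a _ => by push_cast; ring
    rw [hTie]
    have : ((k:ℂ) + 1) = (n:ℂ) := by push_cast [hn]; ring
    rw [Complex.ofReal_add, Complex.ofReal_natCast, Complex.ofReal_one, this, ← key]
    refine (Finset.sum_congr rfl fun m _ => ?_).symm
    rw [Complex.ofReal_pow, ← stepA m, mul_pow]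
  exact_mod_cast final

lemma convexOn_finsum {ι : Type*} (s : Set ℝ) (hs : Convex ℝ s) (t : Finset ι) (f : ι → ℝ → ℝ)
    (h : ∀ i ∈ t, ConvexOn ℝ s (f i)) : ConvexOn ℝ s (fun p => ∑ i ∈ t, f i p) := by
  classical
  induction t using Finset.induction_on with
  | empty => simpa using convexOn_const 0 hs
  | @insert a t ha ih =>
      simp only [Finset.sum_insert ha]
      exact (h a (Finset.mem_insert_self a t)).add
        (ih fun i hi => h i (Finset.mem_insert_of_mem hi))

lemma term_convex (k : ℕ) (c : ℝ) (hc : -1 ≤ c) (hc1 : c ≤ 1) :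
    ConvexOn ℝ (Set.Icc (0:ℝ) 1) (fun p => (1 - 2*p*(1-p)*(1 - c))^k) := by
  set t : ℝ := 2*(1-c) with ht
  have ht0 : (0:ℝ) ≤ t := by rw [ht]; linarith
  have ht4 : t ≤ 4 := by rw [ht]; linarith
  have h2 : ConvexOn ℝ Set.univ (fun p : ℝ => (p - 1/2)^2) := by
    have h0 : ConvexOn ℝ Set.univ (fun x : ℝ => x^2) := Even.convexOn_pow even_two
    have h3 := h0.translate_right (-(1/2) : ℝ)
    have he : ((fun x : ℝ => x^2) ∘ fun z : ℝ => -(1/2) + z) = (fun p : ℝ => (p - 1/2)^2) := by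
      funext z; simp [Function.comp]; ring
    rw [he, Set.preimage_univ] at h3
    exact h3
  have hq : ConvexOn ℝ (Set.Icc (0:ℝ) 1) (fun p => t*(p - 1/2)^2 + (1 - t/4)) := by
    have := ((h2.smul ht0).add_const (1 - t/4)).subset (Set.subset_univ _) (convex_Icc 0 1)
    simpa [smul_eq_mul, Pi.add_def] using this
  have hnn : ∀ ⦃p : ℝ⦄, p ∈ Set.Icc (0:ℝ) 1 → 0 ≤ t*(p - 1/2)^2 + (1 - t/4) := by
    intro p _
    nlinarith [sq_nonneg (p - 1/2)]
  have hpow := hq.pow hnn k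
  have he : ∀ p : ℝ, 1 - 2*p*(1-p)*(1 - c) = t*(p - 1/2)^2 + (1 - t/4) := by
    intro p; rw [ht]; ring
  have : (fun p : ℝ => (1 - 2*p*(1-p)*(1 - c))^k)
      = (fun p => t*(p - 1/2)^2 + (1 - t/4)) ^ k := by
    funext p; rw [he p]; simp
  rw [this]
  exact hpow

theorem stmt_5 (k : ℕ) (hk : 1 ≤ k) :
    ConvexOn ℝ (Set.Icc (0:ℝ) 1) (Tie k) := by
  have hk1 : ((k:ℝ)+1) ≠ 0 := by positivity
  have hfun : Tie k = fun p => ((k:ℝ)+1)⁻¹ *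
      ∑ m ∈ range (k+1), (1 - 2*p*(1-p)*(1 - Real.cos (2*Real.pi*m/((k:ℝ)+1))))^k := by
    funext p
    have h := tie_eq k p
    field_simp
    linarith [h]
  rw [hfun]
  have hsum : ConvexOn ℝ (Set.Icc (0:ℝ) 1)
      (fun p => ∑ m ∈ range (k+1), (1 - 2*p*(1-p)*(1 - Real.cos (2*Real.pi*m/((k:ℝ)+1))))^k) :=
    convexOn_finsum _ (convex_Icc 0 1) _ _
      (fun m _ => term_convex k _ (Real.neg_one_le_cos _) (Real.cos_le_one _))
  have := hsum.smul (c := ((k:ℝ)+1)⁻¹) (by positivity)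
  simpa [smul_eq_mul] using this
end

section
/- For every k ≥ 2, the function h_k(p) = (1 − Tie(k,p))/2 − p is concave on [0,1]. -/
/-- h_k(p) = Win(k,p) - p where Win(k,p) = (1 - Tie(k,p))/2. -/
noncomputable def h (k : ℕ) (p : ℝ) : ℝ := (1 - Tie k p) / 2 - p

open Finset Complex

private lemma aux_dvd (k a b : ℕ) (ha : a ≤ k) (hb : b ≤ k) :
    (k+1) ∣ (a + k*b) ↔ a = b := by
  constructor
  · rintro ⟨c, hc⟩
    have hc' : (a:ℤ) + k*b = (k+1)*c := by exact_mod_cast hc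
    have h1 : (a:ℤ) - b = (k+1)*((c:ℤ)-b) := by linear_combination hc'
    have hb1 : (a:ℤ) - b ≤ k := by
      have : (a:ℤ) ≤ k := by exact_mod_cast ha
      have hb0 : (0:ℤ) ≤ b := Int.natCast_nonneg b
      linarith
    have hb2 : -(k:ℤ) ≤ (a:ℤ) - b := by
      have : (b:ℤ) ≤ k := by exact_mod_cast hb
      have ha0 : (0:ℤ) ≤ a := Int.natCast_nonneg a
      linarith
    have hd : (c:ℤ) - b = 0 := by
      rcases lt_trichotomy ((c:ℤ)-b) 0 with hlt|he|hgt
      · exfalso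
        have : ((k:ℤ)+1)*((c:ℤ)-b) ≤ ((k:ℤ)+1)*(-1) :=
          mul_le_mul_of_nonneg_left (by linarith) (by positivity)
        linarith
      · exact he
      · exfalso
        have : ((k:ℤ)+1)*1 ≤ ((k:ℤ)+1)*((c:ℤ)-b) :=
          mul_le_mul_of_nonneg_left (by linarith) (by positivity)
        linarith
    have : (a:ℤ) = b := by rw [hd, mul_zero] at h1; linarith
    exact_mod_cast this
  · rintro rfl; exact ⟨a, by ring⟩


private lemma sum_pow_eq_zero {N : ℕ} {ζ : ℂ} (hζ : IsPrimitiveRoot ζ N) {m : ℕ}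
    (hm : ¬ N ∣ m) : ∑ l ∈ Finset.range N, (ζ^m)^l = 0 := by
  have hne : ζ^m ≠ 1 := fun hh => hm ((hζ.pow_eq_one_iff_dvd m).1 hh)
  rw [geom_sum_eq hne]
  have hNone : (ζ^m)^N = 1 := by
    rw [← pow_mul, mul_comm, pow_mul, hζ.pow_eq_one, one_pow]
  rw [hNone]
  simp

private lemma tie_rep (k : ℕ) (p : ℝ) :
    Tie k p = ((k:ℝ)+1)⁻¹ * ∑ l ∈ Finset.range (k+1),
      (Complex.normSq ((p:ℂ) * (Complex.exp (2*Real.pi*Complex.I/((k+1:ℕ):ℂ)))^l + (1-(p:ℂ))))^k := by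
  set ζ : ℂ := Complex.exp (2*Real.pi*Complex.I/((k+1:ℕ):ℂ)) with hζdef
  have hζ : IsPrimitiveRoot ζ (k+1) := Complex.isPrimitiveRoot_exp (k+1) (Nat.succ_ne_zero k)
  have hζ1 : ζ ^ (k+1) = 1 := hζ.pow_eq_one
  have habs : ‖ζ‖ = 1 := by
    have harg : (2*(Real.pi:ℂ)*Complex.I/((k+1:ℕ):ℂ)) = ((2*Real.pi/((k+1:ℕ)) : ℝ) : ℂ) * Complex.I := by
      push_cast; ring
    rw [hζdef, harg, Complex.norm_exp_ofReal_mul_I]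
  have hconj : (starRingEnd ℂ) ζ = ζ^k := by
    have h1 : ζ⁻¹ = (starRingEnd ℂ) ζ := Complex.inv_eq_conj habs
    have h2 : ζ^k * ζ = 1 := by rw [← pow_succ]; exact hζ1
    rw [← h1, eq_comm, ← eq_inv_of_mul_eq_one_left h2]
  set z : ℕ → ℂ := fun l => (p:ℂ) * ζ^l + (1-(p:ℂ)) with hzdef
  set A : ℕ → ℂ := fun a => (p:ℂ)^a * (1-(p:ℂ))^(k-a) * (k.choose a) with hAdef
  have hz : ∀ l, (z l)^k = ∑ a ∈ range (k+1), A a * (ζ^a)^l := by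
    intro l
    rw [hzdef, add_pow]
    refine Finset.sum_congr rfl fun a ha => ?_
    rw [mul_pow, ← pow_mul, mul_comm l a, pow_mul]
    ring
  have hzc : ∀ l, ((starRingEnd ℂ) (z l))^k = ∑ b ∈ range (k+1), A b * (ζ^(k*b))^l := by
    intro l
    have : (starRingEnd ℂ) (z l) = (p:ℂ) * (ζ^k)^l + (1-(p:ℂ)) := by
      simp [hzdef, map_add, map_mul, map_pow, hconj, Complex.conj_ofReal, map_sub, map_one,
        ← pow_mul, mul_comm]
    rw [this, add_pow]
    refine Finset.sum_congr rfl fun b hb => ?_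
    rw [mul_pow, ← pow_mul, ← pow_mul]
    rw [show k * (l * b) = (k*b) * l by ring, pow_mul]
    ring
  have key : ∑ l ∈ range (k+1), ((Complex.normSq (z l) : ℂ))^k
      = ((k+1:ℕ):ℂ) * ∑ j ∈ range (k+1), ((k.choose j : ℂ) * (p:ℂ)^j * (1-(p:ℂ))^(k-j))^2 := by
    have step1 : ∀ l, ((Complex.normSq (z l) : ℂ))^k
        = ∑ a ∈ range (k+1), ∑ b ∈ range (k+1), A a * A b * (ζ^(a + k*b))^l := by
      intro l
      rw [← Complex.mul_conj, mul_pow, hz, hzc, Finset.sum_mul_sum]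
      refine Finset.sum_congr rfl fun a ha => Finset.sum_congr rfl fun b hb => ?_
      rw [pow_add, mul_pow]
      ring
    calc ∑ l ∈ range (k+1), ((Complex.normSq (z l) : ℂ))^k
        = ∑ l ∈ range (k+1), ∑ a ∈ range (k+1), ∑ b ∈ range (k+1),
            A a * A b * (ζ^(a + k*b))^l := Finset.sum_congr rfl fun l _ => step1 l
      _ = ∑ a ∈ range (k+1), ∑ b ∈ range (k+1), ∑ l ∈ range (k+1),
            A a * A b * (ζ^(a + k*b))^l := by
          rw [Finset.sum_comm]
          exact Finset.sum_congr rfl fun a _ => Finset.sum_comm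
      _ = ∑ a ∈ range (k+1), ∑ b ∈ range (k+1),
            A a * A b * ∑ l ∈ range (k+1), (ζ^(a + k*b))^l := by
          exact Finset.sum_congr rfl fun a _ => Finset.sum_congr rfl fun b _ =>
            (Finset.mul_sum _ _ _).symm
      _ = ∑ a ∈ range (k+1), A a * A a * (k+1:ℕ) := by
          refine Finset.sum_congr rfl fun a ha => ?_
          rw [Finset.sum_eq_single a]
          · rw [show a + k*a = (k+1)*a by ring, pow_mul, hζ1, one_pow]
            simp
          · intro b hb hba
            have hnd : ¬ (k+1) ∣ (a + k*b) := by
              rw [aux_dvd k a b (Nat.lt_succ_iff.1 (Finset.mem_range.1 ha))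
                (Nat.lt_succ_iff.1 (Finset.mem_range.1 hb))]
              exact fun hh => hba hh.symm
            rw [sum_pow_eq_zero hζ hnd, mul_zero]
          · intro hna; exact absurd ha hna
      _ = ((k+1:ℕ):ℂ) * ∑ j ∈ range (k+1), ((k.choose j : ℂ) * (p:ℂ)^j * (1-(p:ℂ))^(k-j))^2 := by
          rw [Finset.mul_sum]
          refine Finset.sum_congr rfl fun a _ => ?_
          rw [hAdef]
          ring
  have hreal : ((∑ l ∈ range (k+1), (Complex.normSq (z l))^k : ℝ) : ℂ)
      = (((k+1:ℕ) * Tie k p : ℝ) : ℂ) := by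
    rw [Tie]
    push_cast
    rw [key]
    push_cast
    ring
  have hreal' : ∑ l ∈ range (k+1), (Complex.normSq (z l))^k = (k+1:ℕ) * Tie k p :=
    Complex.ofReal_injective hreal
  have hk1 : ((k:ℝ)+1) ≠ 0 := by positivity
  rw [hzdef] at hreal'
  simp only at hreal'
  field_simp
  rw [mul_comm, show (k:ℝ)+1 = ((k+1:ℕ):ℝ) from by push_cast; ring, ← hreal']

private lemma quad_convex {c : ℝ} (hc0 : 0 ≤ c) :
    ConvexOn ℝ Set.univ (fun p : ℝ => c*p^2 - c*p + 1) := by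
  refine ⟨convex_univ, fun x _ y _ a b ha hb hab => ?_⟩
  simp only [smul_eq_mul]
  have key : a*(c*x^2-c*x+1) + b*(c*y^2-c*y+1) - (c*(a*x+b*y)^2 - c*(a*x+b*y) + 1)
      = c*(a*b*(x-y)^2) := by linear_combination ((1:ℝ) - c*a*x^2 - c*b*y^2) * hab
  have hnn : (0:ℝ) ≤ c*(a*b*(x-y)^2) :=
    mul_nonneg hc0 (mul_nonneg (mul_nonneg ha hb) (sq_nonneg (x-y)))
  linarith [key, hnn]

private lemma tie_convex (k : ℕ) : ConvexOn ℝ Set.univ (Tie k) := by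
  set ζ : ℂ := Complex.exp (2*Real.pi*Complex.I/((k+1:ℕ):ℂ)) with hζdef
  have habs : ‖ζ‖ = 1 := by
    have harg : (2*(Real.pi:ℂ)*Complex.I/((k+1:ℕ):ℂ)) = ((2*Real.pi/((k+1:ℕ)) : ℝ) : ℂ) * Complex.I := by
      push_cast; ring
    rw [hζdef, harg, Complex.norm_exp_ofReal_mul_I]
  have hF : ∀ l, ConvexOn ℝ Set.univ
      (fun p : ℝ => (Complex.normSq ((p:ℂ) * ζ^l + (1-(p:ℂ))))^k) := by
    intro l
    have hr : (ζ^l).re^2 + (ζ^l).im^2 = 1 := by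
      have h1 : Complex.normSq (ζ^l) = 1 := by
        rw [map_pow, Complex.normSq_eq_norm_sq, habs]; norm_num
      rw [Complex.normSq_apply] at h1
      nlinarith [h1]
    set r : ℝ := (ζ^l).re with hrdef
    set c : ℝ := 2*(1-r) with hcdef
    have hc0 : 0 ≤ c := by nlinarith [sq_nonneg ((ζ^l).im), sq_nonneg (r-1)]
    have hc4 : c ≤ 4 := by nlinarith [sq_nonneg ((ζ^l).im), sq_nonneg (r+1)]
    have hval : ∀ p : ℝ, Complex.normSq ((p:ℂ) * ζ^l + (1-(p:ℂ))) = c*p^2 - c*p + 1 := by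
      intro p
      rw [Complex.normSq_apply]
      simp only [Complex.add_re, Complex.add_im, Complex.mul_re, Complex.mul_im,
        Complex.sub_re, Complex.sub_im, Complex.ofReal_re, Complex.ofReal_im,
        Complex.one_re, Complex.one_im, hcdef, hrdef]
      ring_nf
      nlinarith [hr]
    have hnn : ∀ p : ℝ, (0:ℝ) ≤ c*p^2 - c*p + 1 := by
      intro p
      nlinarith [mul_nonneg hc0 (sq_nonneg (2*p-1))]
    have hpow := (quad_convex hc0).pow (fun p _ => hnn p) k
    have heq : (fun p : ℝ => (Complex.normSq ((p:ℂ) * ζ^l + (1-(p:ℂ))))^k)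
        = (fun p : ℝ => c*p^2 - c*p + 1)^k := by
      funext p
      simp [Pi.pow_apply, hval p]
    rw [heq]
    exact hpow
  have hsum : ConvexOn ℝ Set.univ
      (∑ l ∈ Finset.range (k+1),
        (fun p : ℝ => (Complex.normSq ((p:ℂ) * ζ^l + (1-(p:ℂ))))^k)) := by
    refine Finset.sum_induction _ (ConvexOn ℝ Set.univ) (fun f g hf hg => hf.add hg) ?_
      (fun l _ => hF l)
    exact convexOn_const (0:ℝ) convex_univ
  have hsmul := hsum.smul (c := ((k:ℝ)+1)⁻¹) (by positivity)
  have heq : Tie k = ((k:ℝ)+1)⁻¹ • (∑ l ∈ Finset.range (k+1),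
      (fun p : ℝ => (Complex.normSq ((p:ℂ) * ζ^l + (1-(p:ℂ))))^k)) := by
    funext p
    rw [Pi.smul_apply, Finset.sum_apply, smul_eq_mul, tie_rep k p, hζdef]
  rw [heq]
  exact hsmul

theorem stmt_9 (k : ℕ) (hk : 2 ≤ k) :
    ConcaveOn ℝ (Set.Icc (0:ℝ) 1) (h k) := by
  have hT := (tie_convex k).subset (Set.subset_univ _) (convex_Icc (0:ℝ) 1)
  refine ⟨convex_Icc (0:ℝ) 1, fun x hx y hy a b ha hb hab => ?_⟩
  have hTineq := hT.2 hx hy ha hb hab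
  simp only [smul_eq_mul, h] at *
  have e1 : a*((1 - Tie k x)/2 - x) + b*((1 - Tie k y)/2 - y)
      = (a+b)/2 - (a*Tie k x + b*Tie k y)/2 - (a*x+b*y) := by ring
  rw [e1, hab]
  have e2 : (1 - Tie k (a*x+b*y))/2 - (a*x+b*y)
      = 1/2 - Tie k (a*x+b*y)/2 - (a*x+b*y) := by ring
  rw [e2]
  linarith [hTineq]
end

section
/- The unique zero p(k) ∈ (0,1) of h_k is strictly increasing in k: for 2 ≤ k' < k, p(k') < p(k). -/
open Finset

/-- Binomial pmf term. -/
noncomputable def A (n j : ℕ) (p : ℝ) : ℝ := (n.choose j : ℝ) * p ^ j * (1 - p) ^ (n - j)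

lemma A_eq_zero {n j : ℕ} (h : n < j) (p : ℝ) : A n j p = 0 := by
  simp [A, Nat.choose_eq_zero_of_lt h]

lemma A_pascal (n j : ℕ) (p : ℝ) :
    A (n+1) (j+1) p = p * A n j p + (1 - p) * A n (j+1) p := by
  rcases lt_or_ge j n with hj | hj
  · have h1 : n - j = (n - (j+1)) + 1 := by omega
    rw [A, A, A, Nat.choose_succ_succ, Nat.succ_sub_succ, h1]
    push_cast
    ring
  · rcases eq_or_lt_of_le hj with hj' | hj'
    · subst hj'
      rw [A, A, A_eq_zero (by omega)]
      simp [Nat.choose_self, Nat.sub_self, pow_succ]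
      ring
    · rw [A_eq_zero (by omega), A_eq_zero (by omega), A_eq_zero (by omega)]
      ring

lemma A_pascal0 (n : ℕ) (p : ℝ) : A (n+1) 0 p = (1 - p) * A n 0 p := by
  simp [A, pow_succ]
  ring

/-- correlation sums -/
noncomputable def Qn (m n : ℕ) (p : ℝ) : ℝ :=
  ∑ j ∈ range (n+1), A n j p * A n (j+m) p

/-- shifted sums -/
lemma Qn_shift (s m n : ℕ) (p : ℝ) :
    ∑ j ∈ range (n+1), A n (j+s) p * A n (j+s+m) p
      = Qn m n p - ∑ i ∈ range s, A n i p * A n (i+m) p := by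
  induction s with
  | zero => simp [Qn]
  | succ s ih =>
      have h1 : ∑ j ∈ range (n+1), A n (j+s) p * A n (j+s+m) p
          = (∑ j ∈ range n, A n (j+1+s) p * A n (j+1+s+m) p) + A n s p * A n (s+m) p := by
        rw [Finset.sum_range_succ']
        norm_num
      have h2 : ∑ j ∈ range (n+1), A n (j+(s+1)) p * A n (j+(s+1)+m) p
          = ∑ j ∈ range n, A n (j+1+s) p * A n (j+1+s+m) p := by
        rw [Finset.sum_range_succ, A_eq_zero (by omega)]
        rw [zero_mul, add_zero]
        apply Finset.sum_congr rfl
        intro i _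
        congr 2 <;> omega
      rw [h2, Finset.sum_range_succ]
      have := ih
      rw [h1] at this
      linarith

lemma Qn_rec0 (n : ℕ) (p : ℝ) :
    Qn 0 (n+1) p = (1 - 2*(p*(1-p))) * Qn 0 n p + 2*(p*(1-p)) * Qn 1 n p := by
  have e3 := Qn_shift 1 0 n p
  simp only [Nat.add_zero] at e3 ⊢
  rw [Finset.sum_range_one] at e3
  have step : Qn 0 (n+1) p
      = ∑ j ∈ range (n+1), ((p * A n j p + (1-p) * A n (j+1) p)
          * (p * A n j p + (1-p) * A n (j+1) p))
        + ((1-p) * A n 0 p) * ((1-p) * A n 0 p) := by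
    rw [Qn, Finset.sum_range_succ']
    simp only [Nat.add_zero]
    rw [A_pascal0]
    congr 1
    apply Finset.sum_congr rfl
    intro j _
    rw [A_pascal]
  rw [step]
  have expand : ∀ j ∈ range (n+1), (p * A n j p + (1-p) * A n (j+1) p)
          * (p * A n j p + (1-p) * A n (j+1) p)
      = p^2 * (A n j p * A n j p) + (2*(p*(1-p))) * (A n j p * A n (j+1) p)
        + (1-p)^2 * (A n (j+1) p * A n (j+1) p) := by
    intro j _
    ring
  rw [Finset.sum_congr rfl expand]
  rw [Finset.sum_add_distrib, Finset.sum_add_distrib,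
    ← Finset.mul_sum, ← Finset.mul_sum, ← Finset.mul_sum]
  have e1 : ∑ j ∈ range (n+1), A n j p * A n j p = Qn 0 n p := by
    rw [Qn]; simp only [Nat.add_zero]
  have e2 : ∑ j ∈ range (n+1), A n j p * A n (j+1) p = Qn 1 n p := rfl
  rw [e1, e2, e3]
  ring

lemma Qn_recS (m n : ℕ) (p : ℝ) :
    Qn (m+1) (n+1) p = (1 - 2*(p*(1-p))) * Qn (m+1) n p
      + (p*(1-p)) * (Qn m n p + Qn (m+2) n p) := by
  have e3 := Qn_shift 1 m n p
  rw [Finset.sum_range_one] at e3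
  simp only [Nat.zero_add, Nat.add_comm 1 m] at e3
  -- e3 : ∑ j, A n (j+1) p * A n (j+1+m) p = Qn m n p - A n 0 p * A n m p
  have step : Qn (m+1) (n+1) p
      = ∑ j ∈ range (n+1), ((p * A n j p + (1-p) * A n (j+1) p)
          * (p * A n (j+m+1) p + (1-p) * A n (j+m+2) p))
        + ((1-p) * A n 0 p) * (p * A n m p + (1-p) * A n (m+1) p) := by
    rw [Qn, Finset.sum_range_succ']
    rw [A_pascal0]
    congr 1
    · apply Finset.sum_congr rfl
      intro j _
      rw [A_pascal]
      rw [show j+1+(m+1) = (j+m+1)+1 by omega, A_pascal]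
    · rw [show 0+(m+1) = m+1 by omega, A_pascal]
  rw [step]
  have expand : ∀ j ∈ range (n+1), (p * A n j p + (1-p) * A n (j+1) p)
          * (p * A n (j+m+1) p + (1-p) * A n (j+m+2) p)
      = p^2 * (A n j p * A n (j+(m+1)) p) + (p*(1-p)) * (A n j p * A n (j+(m+2)) p)
        + (p*(1-p)) * (A n (j+1) p * A n (j+1+m) p)
        + (1-p)^2 * (A n (j+1) p * A n (j+1+(m+1)) p) := by
    intro j _
    rw [show j+(m+1) = j+m+1 by omega, show j+(m+2) = j+m+2 by omega,
      show j+1+m = j+m+1 by omega, show j+1+(m+1) = j+m+2 by omega]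
    ring
  rw [Finset.sum_congr rfl expand]
  rw [Finset.sum_add_distrib, Finset.sum_add_distrib, Finset.sum_add_distrib,
    ← Finset.mul_sum, ← Finset.mul_sum, ← Finset.mul_sum, ← Finset.mul_sum]
  have e4 := Qn_shift 1 (m+1) n p
  rw [Finset.sum_range_one] at e4
  simp only [Nat.zero_add, Nat.add_comm 1 (m+1)] at e4
  have e1 : ∑ j ∈ range (n+1), A n j p * A n (j+(m+1)) p = Qn (m+1) n p := rfl
  have e2 : ∑ j ∈ range (n+1), A n j p * A n (j+(m+2)) p = Qn (m+2) n p := rfl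
  rw [e1, e2, e3, e4]
  ring

noncomputable def Q (m : ℤ) (n : ℕ) (p : ℝ) : ℝ := Qn m.natAbs n p

lemma Q_rec (m : ℤ) (n : ℕ) (p : ℝ) :
    Q m (n+1) p = (1 - 2*(p*(1-p))) * Q m n p
      + (p*(1-p)) * (Q (m-1) n p + Q (m+1) n p) := by
  unfold Q
  rcases lt_trichotomy m 0 with hm | hm | hm
  · obtain ⟨b, hb⟩ : ∃ b, m.natAbs = b + 1 := ⟨m.natAbs - 1, by omega⟩
    rw [hb, show (m-1).natAbs = b+2 by omega, show (m+1).natAbs = b by omega,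
      Qn_recS b n p]
    ring
  · subst hm
    norm_num
    rw [Qn_rec0 n p]
    ring
  · obtain ⟨b, hb⟩ : ∃ b, m.natAbs = b + 1 := ⟨m.natAbs - 1, by omega⟩
    rw [hb, show (m-1).natAbs = b by omega, show (m+1).natAbs = b+2 by omega,
      Qn_recS b n p]

lemma Qn_level0 (a : ℕ) (p : ℝ) : Qn a 0 p = if a = 0 then 1 else 0 := by
  rcases a with _ | a <;> simp [Qn, A, Nat.choose_eq_zero_of_lt]

lemma Q_level0 (m : ℤ) (p : ℝ) : Q m 0 p = if m = 0 then 1 else 0 := by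
  rw [Q, Qn_level0]
  by_cases h : m = 0
  · simp [h]
  · rw [if_neg h, if_neg (by omega)]

lemma Qn_level1 (a : ℕ) (p : ℝ) :
    Qn a 1 p = if a = 0 then ((1-p)*(1-p) + p*p)
      else if a = 1 then (1-p)*p else 0 := by
  rcases a with _ | a
  · simp [Qn, Finset.sum_range_succ, A]
  · rcases a with _ | a
    · simp [Qn, Finset.sum_range_succ, A, Nat.choose_eq_zero_of_lt]
    · simp [Qn, Finset.sum_range_succ, A, Nat.choose_eq_zero_of_lt (by omega : 1 < a + 2),
        Nat.choose_eq_zero_of_lt (by omega : 1 < 1 + (a + 2))]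

lemma Q_level1 (m : ℤ) (p : ℝ) :
    Q m 1 p = if m = 0 then ((1-p)*(1-p) + p*p)
      else if m = 1 ∨ m = -1 then (1-p)*p else 0 := by
  rw [Q, Qn_level1]
  by_cases h : m = 0
  · simp [h]
  · rw [if_neg (by omega), if_neg h]
    by_cases h1 : m = 1 ∨ m = -1
    · rw [if_pos h1, if_pos (by omega)]
    · rw [if_neg h1, if_neg (by omega)]

lemma Q_hasDerivAt (n : ℕ) (m : ℤ) (p : ℝ) :
    HasDerivAt (fun x => Q m (n+1) x)
      (((n:ℝ)+1) * (2*p-1) * (2 * Q m n p - Q (m+1) n p - Q (m-1) n p)) p := by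
  induction n generalizing m p with
  | zero =>
    simp only [Nat.cast_zero, zero_add]
    by_cases h0 : m = 0
    · subst h0
      have hf : (fun x => Q 0 1 x) = fun x : ℝ => (1-x)*(1-x) + x*x := by
        funext x; rw [Q_level1]; norm_num
      rw [hf]
      have hd : HasDerivAt (fun x : ℝ => (1-x)*(1-x) + x*x)
          ((-1)*(1-p) + (1-p)*(-1) + (1*p + p*1)) p := by
        exact (((hasDerivAt_id p).const_sub 1).mul ((hasDerivAt_id p).const_sub 1)).add
          ((hasDerivAt_id p).mul (hasDerivAt_id p))
      convert hd using 1
      rw [Q_level0, Q_level0, Q_level0]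
      norm_num
      ring
    · by_cases h1 : m = 1 ∨ m = -1
      · have hf : (fun x => Q m 1 x) = fun x : ℝ => (1-x)*x := by
          funext x; rw [Q_level1, if_neg h0, if_pos h1]
        rw [hf]
        have hd : HasDerivAt (fun x : ℝ => (1-x)*x) ((-1)*p + (1-p)*1) p :=
          ((hasDerivAt_id p).const_sub 1).mul (hasDerivAt_id p)
        convert hd using 1
        rw [Q_level0, Q_level0, Q_level0, if_neg h0]
        rcases h1 with h1 | h1 <;> subst h1 <;> norm_num <;> ring
      · have hf : (fun x => Q m 1 x) = fun _ : ℝ => (0:ℝ) := by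
          funext x; rw [Q_level1, if_neg h0, if_neg h1]
        rw [hf]
        have hd : HasDerivAt (fun _ : ℝ => (0:ℝ)) 0 p := hasDerivAt_const p 0
        convert hd using 1
        rw [Q_level0, Q_level0, Q_level0, if_neg h0, if_neg (by omega : ¬ m + 1 = 0),
          if_neg (by omega : ¬ m - 1 = 0)]
        ring
  | succ n ih =>
    have hf : (fun x => Q m (n+1+1) x)
        = fun x => (1 - 2*(x*(1-x))) * Q m (n+1) x
            + (x*(1-x)) * (Q (m-1) (n+1) x + Q (m+1) (n+1) x) := by
      funext x; rw [Q_rec]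
    rw [hf]
    have hu : HasDerivAt (fun x : ℝ => x*(1-x)) (1*(1-p) + p*(-1)) p :=
      (hasDerivAt_id p).mul ((hasDerivAt_id p).const_sub 1)
    have hc : HasDerivAt (fun x : ℝ => 1 - 2*(x*(1-x))) (-(2*(1*(1-p) + p*(-1)))) p :=
      (hu.const_mul 2).const_sub 1
    have hd := ((hc.mul (ih m p)).add (hu.mul ((ih (m-1) p).add (ih (m+1) p))))
    convert hd using 1
    · rfl
    · rfl
    · rfl
    have em1 : m - 1 + 1 = m := by ring
    have ep1 : m + 1 - 1 = m := by ring
    have em2 : m - 1 - 1 = m - 2 := by ring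
    have ep2 : m + 1 + 1 = m + 2 := by ring
    rw [em1, ep1, em2, ep2]
    simp only [Pi.add_apply]
    rw [Q_rec m n p, Q_rec (m-1) n p, Q_rec (m+1) n p]
    rw [em1, ep1, em2, ep2]
    push_cast
    ring

lemma Qn_diag (n : ℕ) (p : ℝ) : Qn 0 n p = ∑ j ∈ range (n+1), A n j p * A n j p := by
  rw [Qn]; simp only [Nat.add_zero]

lemma sos1 (n : ℕ) (p : ℝ) :
    2*(Qn 0 n p - Qn 1 n p)
      = (∑ j ∈ range (n+1), (A n j p - A n (j+1) p)^2) + (A n 0 p)^2 := by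
  have e3 := Qn_shift 1 0 n p
  simp only [Nat.add_zero] at e3
  rw [Finset.sum_range_one] at e3
  have expand : ∑ j ∈ range (n+1), (A n j p - A n (j+1) p)^2
      = (∑ j ∈ range (n+1), A n j p * A n j p)
        - 2*(∑ j ∈ range (n+1), A n j p * A n (j+1) p)
        + ∑ j ∈ range (n+1), A n (j+1) p * A n (j+1) p := by
    rw [Finset.mul_sum, ← Finset.sum_sub_distrib, ← Finset.sum_add_distrib]
    apply Finset.sum_congr rfl
    intro j _
    ring
  rw [expand, e3, ← Qn_diag]
  have : ∑ j ∈ range (n+1), A n j p * A n (j+1) p = Qn 1 n p := rfl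
  rw [this]
  ring

lemma nonneg1 (n : ℕ) (p : ℝ) : 0 ≤ Qn 0 n p - Qn 1 n p := by
  nlinarith [sos1 n p, Finset.sum_nonneg (fun j (_ : j ∈ range (n+1)) =>
    sq_nonneg (A n j p - A n (j+1) p)), sq_nonneg (A n 0 p)]

lemma pos1 (n : ℕ) (p : ℝ) (hp1 : p < 1) : 0 < Qn 0 n p - Qn 1 n p := by
  have hA0 : 0 < A n 0 p := by
    simp only [A, Nat.choose_zero_right, Nat.cast_one, pow_zero, Nat.sub_zero]
    have h := pow_pos (by linarith : (0:ℝ) < 1 - p) (n - 0)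
    simpa using h
  nlinarith [sos1 n p, Finset.sum_nonneg (fun j (_ : j ∈ range (n+1)) =>
    sq_nonneg (A n j p - A n (j+1) p))]

lemma sos2 (n : ℕ) (p : ℝ) :
    2*(3*Qn 0 n p - 4*Qn 1 n p + Qn 2 n p)
      = (∑ j ∈ range (n+1), (A n j p - 2*A n (j+1) p + A n (j+2) p)^2)
        + (2*A n 0 p - A n 1 p)^2 + (A n 0 p)^2 := by
  have s10 := Qn_shift 1 0 n p
  simp only [Nat.add_zero] at s10
  rw [Finset.sum_range_one] at s10
  have s20 := Qn_shift 2 0 n p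
  simp only [Nat.add_zero] at s20
  rw [show (∑ i ∈ range 2, A n i p * A n i p) = A n 0 p * A n 0 p + A n 1 p * A n 1 p
    from by rw [Finset.sum_range_succ, Finset.sum_range_one]] at s20
  have s11 := Qn_shift 1 1 n p
  rw [Finset.sum_range_one] at s11
  simp only [Nat.zero_add] at s11
  have e1 : ∑ j ∈ range (n+1), A n j p * A n (j+1) p = Qn 1 n p := rfl
  have e2 : ∑ j ∈ range (n+1), A n j p * A n (j+2) p = Qn 2 n p := rfl
  have expand : ∑ j ∈ range (n+1), (A n j p - 2*A n (j+1) p + A n (j+2) p)^2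
      = ((∑ j ∈ range (n+1), A n j p * A n j p)
          + 4*(∑ j ∈ range (n+1), A n (j+1) p * A n (j+1) p)
          + (∑ j ∈ range (n+1), A n (j+2) p * A n (j+2) p)
          + 2*(∑ j ∈ range (n+1), A n j p * A n (j+2) p))
        - (4*(∑ j ∈ range (n+1), A n j p * A n (j+1) p)
          + 4*(∑ j ∈ range (n+1), A n (j+1) p * A n (j+2) p)) := by
    rw [Finset.mul_sum, Finset.mul_sum, Finset.mul_sum, Finset.mul_sum,
      ← Finset.sum_add_distrib, ← Finset.sum_add_distrib, ← Finset.sum_add_distrib,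
      ← Finset.sum_add_distrib, ← Finset.sum_sub_distrib]
    apply Finset.sum_congr rfl
    intro j _
    ring
  have s11' : ∑ j ∈ range (n+1), A n (j+1) p * A n (j+2) p = Qn 1 n p - A n 0 p * A n 1 p := by
    rw [← s11]
  rw [expand, s10, s20, s11', e1, e2, ← Qn_diag]
  ring

lemma nonneg2 (n : ℕ) (p : ℝ) : 0 ≤ 3*Qn 0 n p - 4*Qn 1 n p + Qn 2 n p := by
  nlinarith [sos2 n p, Finset.sum_nonneg (fun j (_ : j ∈ range (n+1)) =>
    sq_nonneg (A n j p - 2*A n (j+1) p + A n (j+2) p)),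
    sq_nonneg (2*A n 0 p - A n 1 p), sq_nonneg (A n 0 p)]

lemma Q_neg_one (n : ℕ) (p : ℝ) : Q (0-1) n p = Q 1 n p := by
  unfold Q; norm_num

lemma Tie_eq_Q (k : ℕ) (p : ℝ) : Tie k p = Q 0 k p := by
  rw [Tie, Q]
  simp only [Int.natAbs_zero]
  rw [Qn_diag]
  apply Finset.sum_congr rfl
  intro j _
  rw [show A k j p = (k.choose j : ℝ) * p ^ j * (1 - p) ^ (k - j) from rfl]
  ring

lemma Tie_succ_lt (n : ℕ) (p : ℝ) (hp0 : 0 < p) (hp1 : p < 1) :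
    Tie (n+1) p < Tie n p := by
  rw [Tie_eq_Q, Tie_eq_Q, Q_rec, Q_neg_one]
  have hu : 0 < p*(1-p) := by nlinarith
  have h1 := pos1 n p hp1
  have e0 : Q 0 n p = Qn 0 n p := rfl
  have e1 : Q 1 n p = Qn 1 n p := rfl
  have e2 : Q (0+1) n p = Qn 1 n p := by unfold Q; norm_num
  rw [e0, e1, e2]
  nlinarith

lemma Tie_lt_of_lt {k' k : ℕ} (hkk : k' < k) (p : ℝ) (hp0 : 0 < p) (hp1 : p < 1) :
    Tie k p < Tie k' p := by
  induction k with
  | zero => omega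
  | succ n ih =>
      rcases Nat.lt_succ_iff_lt_or_eq.mp hkk with hlt | heq
      · exact lt_trans (Tie_succ_lt n p hp0 hp1) (ih hlt)
      · subst heq; exact Tie_succ_lt k' p hp0 hp1

lemma Tie_zero (k : ℕ) : Tie k 0 = 1 := by
  rw [Tie, Finset.sum_range_succ']
  simp

/-- first derivative of h -/
lemma h_hasDerivAt (n : ℕ) (p : ℝ) :
    HasDerivAt (h (n+1))
      (-(((n:ℝ)+1) * (2*p-1) * (Q 0 n p - Q 1 n p)) - 1) p := by
  have hq := Q_hasDerivAt n 0 p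
  have hf : h (n+1) = fun x => (1 - Q 0 (n+1) x)/2 - x := by
    funext x; rw [h, Tie_eq_Q]
  rw [hf]
  have hd := ((hq.const_sub 1).div_const 2).sub (hasDerivAt_id p)
  convert hd using 1
  · rfl
  · rfl
  · rfl
  rw [Q_neg_one]
  have : (0:ℤ) + 1 = 1 := by ring
  rw [this]
  field_simp
  ring

noncomputable def g1 (n : ℕ) (p : ℝ) : ℝ :=
  -(((n:ℝ)+2) * (2*p-1) * (Q 0 (n+1) p - Q 1 (n+1) p)) - 1

noncomputable def g2 (n : ℕ) (p : ℝ) : ℝ :=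
  -(((n:ℝ)+2) * (2*(Q 0 (n+1) p - Q 1 (n+1) p)
    + (2*p-1)*(2*p-1)*(((n:ℝ)+1)*(3*Q 0 n p - 4*Q 1 n p + Q 2 n p))))

lemma g1_hasDerivAt (n : ℕ) (p : ℝ) : HasDerivAt (g1 n) (g2 n p) p := by
  have hq0 := Q_hasDerivAt n 0 p
  have hq1 := Q_hasDerivAt n 1 p
  have hlin : HasDerivAt (fun x : ℝ => 2*x-1) (2*1) p :=
    ((hasDerivAt_id p).const_mul 2).sub_const 1
  have hinner := hlin.mul (hq0.sub hq1)
  have hd := ((hinner.const_mul (((n:ℝ)+2))).neg).sub_const 1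
  have hfun : g1 n = fun x => -(((n:ℝ)+2) * ((2*x-1) * (Q 0 (n+1) x - Q 1 (n+1) x))) - 1 := by
    funext x; rw [g1]; ring
  rw [hfun]
  convert hd using 1
  · rfl
  · rfl
  · rfl
  rw [g2]
  have e1 : Q (0+1) n p = Q 1 n p := by norm_num
  have e2 : Q (0-1) n p = Q 1 n p := by unfold Q; norm_num
  have e3 : Q (1+1) n p = Q 2 n p := by norm_num
  have e4 : Q (1-1) n p = Q 0 n p := by norm_num
  rw [e1, e2, e3, e4]
  simp only [Pi.sub_apply]
  ring

lemma g2_nonpos (n : ℕ) (p : ℝ) : g2 n p ≤ 0 := by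
  rw [g2]
  have h1 := nonneg1 (n+1) p
  have h2 := nonneg2 n p
  have e0 : Q 0 (n+1) p = Qn 0 (n+1) p := rfl
  have e1 : Q 1 (n+1) p = Qn 1 (n+1) p := rfl
  have f0 : Q 0 n p = Qn 0 n p := rfl
  have f1 : Q 1 n p = Qn 1 n p := rfl
  have f2 : Q 2 n p = Qn 2 n p := rfl
  rw [e0, e1, f0, f1, f2]
  have t1 : (0:ℝ) ≤ 2*(Qn 0 (n+1) p - Qn 1 (n+1) p) := by linarith
  have t2 : (0:ℝ) ≤ (2*p-1)*(2*p-1)*(((n:ℝ)+1)*(3*Qn 0 n p - 4*Qn 1 n p + Qn 2 n p)) :=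
    mul_nonneg (mul_self_nonneg _) (mul_nonneg (by positivity) h2)
  have t3 : (0:ℝ) ≤ ((n:ℝ)+2) * (2*(Qn 0 (n+1) p - Qn 1 (n+1) p)
      + (2*p-1)*(2*p-1)*(((n:ℝ)+1)*(3*Qn 0 n p - 4*Qn 1 n p + Qn 2 n p))) :=
    mul_nonneg (by positivity) (by linarith)
  linarith

lemma h_concave (n : ℕ) : ConcaveOn ℝ Set.univ (h (n+2)) := by
  have hd1 : ∀ p : ℝ, HasDerivAt (h (n+2)) (g1 n p) p := by
    intro p
    have h0 := h_hasDerivAt (n+1) p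
    have heq : (-((((n+1:ℕ):ℝ)+1) * (2*p-1) * (Q 0 (n+1) p - Q 1 (n+1) p)) - 1) = g1 n p := by
      rw [g1]; push_cast; ring
    rw [heq] at h0
    exact h0
  have hderiv : deriv (h (n+2)) = g1 n := funext fun p => (hd1 p).deriv
  apply concaveOn_univ_of_deriv2_nonpos
  · exact fun p => (hd1 p).differentiableAt
  · rw [hderiv]; exact fun p => (g1_hasDerivAt n p).differentiableAt
  · intro x
    have : deriv^[2] (h (n+2)) x = deriv (deriv (h (n+2))) x := rfl
    rw [this, hderiv]
    rw [funext fun p => (g1_hasDerivAt n p).deriv]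
    exact g2_nonpos n x

theorem stmt_13 (k k' : ℕ) (hk' : 2 ≤ k') (hkk : k' < k)
    (p p' : ℝ) (hp : p ∈ Set.Ioo (0:ℝ) 1) (hzero : h k p = 0)
    (hp' : p' ∈ Set.Ioo (0:ℝ) 1) (hzero' : h k' p' = 0) :
    p' < p := by
  obtain ⟨hp0, hp1⟩ := hp
  obtain ⟨hp'0, hp'1⟩ := hp'
  have hpos : 0 < h k p' := by
    have ht := Tie_lt_of_lt hkk p' hp'0 hp'1
    have h1 : (1 - Tie k' p')/2 - p' = 0 := hzero'
    have h2 : h k p' = (1 - Tie k p')/2 - p' := rfl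
    rw [h2]
    linarith
  by_contra hcon
  push_neg at hcon  -- p ≤ p'
  rcases eq_or_lt_of_le hcon with heq | hlt
  · rw [← heq] at hpos; linarith [hzero ▸ hpos]
  · obtain ⟨n, rfl⟩ : ∃ n, k = n + 2 := ⟨k - 2, by omega⟩
    have hcc := h_concave n
    have hb : (1 - p/p') ≥ 0 := by
      have : p/p' ≤ 1 := by
        rw [div_le_one (by linarith)]
        linarith
      linarith
    have ha : (0:ℝ) ≤ p/p' := by positivity
    have hsum : (1 - p/p') + p/p' = 1 := by ring
    have := hcc.2 (Set.mem_univ (0:ℝ)) (Set.mem_univ p') hb ha hsum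
    have hx : (1 - p/p') • (0:ℝ) + (p/p') • p' = p := by
      rw [smul_eq_mul, smul_eq_mul, mul_zero, zero_add, div_mul_cancel₀ p (ne_of_gt hp'0)]
    rw [hx] at this
    have h0 : h (n+2) 0 = 0 := by
      have : h (n+2) 0 = (1 - Tie (n+2) 0)/2 - 0 := rfl
      rw [this, Tie_zero]; ring
    rw [h0] at this
    simp only [smul_eq_mul, mul_zero, zero_add] at this
    -- this : (p/p') * h (n+2) p' ≤ h (n+2) p = 0
    have hquot : 0 < (p/p') * h (n+2) p' := by
      apply mul_pos _ hpos
      positivity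
    linarith [hzero ▸ this]
end

section
/- In the prisoner's dilemma with payoffs u(c,c)=1, u(c,d)=−l, u(d,c)=1+g, u(d,d)=0 where 0 < g, l < 1/(k−1) and k ≥ 2: if a player samples action c against k opponents of whom j cooperate, and samples d against k opponents of whom j' cooperate, then the total c-sample payoff j − (k−j)l exceeds the total d-sample payoff j'(1+g) if and only if j > j'. -/
/-!
If `j ≤ j'`, the `c`-sample earns at most `j` and the `d`-sample at least `j'`. If `j' < j`, then
`j' ≤ j - 1`, and the gap `j - (k - j) l - (j - 1)(1 + g) = 1 - ((k - j) l + (j - 1) g)` is positive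
because the bracket is a combination of `l` and `g` with nonnegative weights summing to `k - 1`,
while both are below `1 / (k - 1)`.
-/

lemma mul_add_mul_lt_add_mul {a b x y t : ℝ} (ha : 0 ≤ a) (hb : 0 ≤ b) (hab : 0 < a + b)
    (hx : x < t) (hy : y < t) : a * x + b * y < (a + b) * t := by
  rcases ha.eq_or_lt with rfl | ha
  · simpa using mul_lt_mul_of_pos_left hy (by simpa using hab)
  · nlinarith [mul_lt_mul_of_pos_left hx ha, mul_le_mul_of_nonneg_left hy.le hb]

lemma cSample_le_dSample {k j j' g l : ℝ} (hg : 0 ≤ g) (hl : 0 ≤ l) (hjk : j ≤ k)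
    (hjj' : j ≤ j') (hj' : 0 ≤ j') : j - (k - j) * l ≤ j' * (1 + g) := by
  nlinarith [mul_nonneg (sub_nonneg.mpr hjk) hl, mul_nonneg hj' hg]

lemma dSample_lt_cSample {k j j' g l : ℝ} (hk : 0 < k - 1) (hg0 : 0 ≤ g)
    (hg : g < 1 / (k - 1)) (hl : l < 1 / (k - 1)) (hjk : j ≤ k) (hj' : 0 ≤ j')
    (hj'j : j' + 1 ≤ j) :
    j' * (1 + g) < j - (k - j) * l := by
  have hweights : (k - j) * l + (j - 1) * g < 1 := by
    calc (k - j) * l + (j - 1) * g < ((k - j) + (j - 1)) * (1 / (k - 1)) :=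
          mul_add_mul_lt_add_mul (by linarith) (by linarith) (by linarith) hl hg
      _ = 1 := by field_simp; ring
  nlinarith [mul_le_mul_of_nonneg_right (show j' ≤ j - 1 by linarith) (by linarith : 0 ≤ 1 + g)]

theorem stmt_15_general (k : ℕ) (g l : ℝ)
    (hg0 : 0 < g) (hg : g < 1 / ((k : ℝ) - 1))
    (hl0 : 0 < l) (hl : l < 1 / ((k : ℝ) - 1))
    (j j' : ℕ) (hj : j ≤ k) :
    (j : ℝ) - ((k : ℝ) - (j : ℝ)) * l > (j' : ℝ) * (1 + g) ↔ j' < j := by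
  have hk : (0 : ℝ) < k - 1 := one_div_pos.mp (hg0.trans hg)
  have hjk : (j : ℝ) ≤ k := by exact_mod_cast hj
  constructor
  · intro hgt
    by_contra! hle
    exact (cSample_le_dSample hg0.le hl0.le hjk (by exact_mod_cast hle) j'.cast_nonneg).not_gt hgt
  · intro hlt
    exact dSample_lt_cSample hk hg0.le hg hl hjk j'.cast_nonneg (by exact_mod_cast hlt)

/-- In the PD with 0 < g, l < 1/(k-1), the total c-sample payoff j - (k-j)l exceeds
    the total d-sample payoff j'(1+g) iff j > j'. -/
theorem stmt_15 (k : ℕ) (hk : 2 ≤ k) (g l : ℝ)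
    (hg0 : 0 < g) (hg : g < 1 / ((k : ℝ) - 1))
    (hl0 : 0 < l) (hl : l < 1 / ((k : ℝ) - 1))
    (j j' : ℕ) (hj : j ≤ k) (hj' : j' ≤ k) :
    (j : ℝ) - ((k : ℝ) - (j : ℝ)) * l > (j' : ℝ) * (1 + g) ↔ j' < j :=
  stmt_15_general k g l hg0 hg hl0 hl j j' hj
end

section
/- Let M be a square matrix with nonnegative integer entries. If every nonempty principal submatrix of M contains a row all of whose entries are zero, then the spectral radius of M is 0; otherwise the spectral radius of M is at least 1. The same statement holds with 'row' replaced by 'column'. -/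
/-!
If every nonempty principal submatrix has a zero row, one can list the indices as
`i₁, i₂, …` so that row `iₘ` of `M` is supported on `{i₁, …, iₘ₋₁}`; then row `iₘ` of `M ^ m`
vanishes, so `M` is nilpotent and `0` is its only eigenvalue. Otherwise some principal
submatrix has a nonzero entry in every row, so every power `M ^ k` has a nonzero, hence `≥ 1`,
entry: `‖M ^ k‖ ≥ 1` in the `ℓ∞` operator norm, and Gelfand's formula gives spectral radius
`≥ 1`. Columns reduce to rows by transposing.
-/

open Finset Matrix Polynomial
open scoped ENNReal

/-- Every nonempty principal submatrix of `M` (indexed by a nonempty `s`) has a zero row. -/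
def EveryPrincipalSubmatrixHasZeroRow {n : Type*} [Fintype n] (M : Matrix n n ℕ) : Prop :=
  ∀ s : Finset n, s.Nonempty → ∃ i ∈ s, ∀ j ∈ s, M i j = 0

/-- Every nonempty principal submatrix of `M` has a zero column. -/
def EveryPrincipalSubmatrixHasZeroCol {n : Type*} [Fintype n] (M : Matrix n n ℕ) : Prop :=
  ∀ s : Finset n, s.Nonempty → ∃ j ∈ s, ∀ i ∈ s, M i j = 0

namespace Matrix

variable {n R : Type*} [Fintype n] [DecidableEq n]

theorem exists_card_eq_forall_mem_pow_apply_eq_zero [Semiring R] {M : Matrix n n R}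
    (hM : ∀ s : Finset n, s.Nonempty → ∃ i ∈ s, ∀ j ∈ s, M i j = 0) {k : ℕ}
    (hk : k ≤ Fintype.card n) : ∃ t : Finset n, #t = k ∧ ∀ i ∈ t, ∀ j, (M ^ k) i j = 0 := by
  induction k with
  | zero => exact ⟨∅, rfl, by simp⟩
  | succ k ih =>
    obtain ⟨t, rfl, ht⟩ := ih (by omega)
    have hcompl : (tᶜ).Nonempty := by
      rw [nonempty_iff_ne_empty, Ne, compl_eq_empty_iff]
      rintro rfl
      simp at hk
    obtain ⟨i₀, hi₀, hrow⟩ := hM tᶜ hcompl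
    rw [mem_compl] at hi₀
    refine ⟨insert i₀ t, card_insert_of_notMem hi₀, fun i hi j => ?_⟩
    rcases mem_insert.mp hi with rfl | hi
    · rw [pow_succ', mul_apply]
      refine sum_eq_zero fun c _ => ?_
      by_cases hc : c ∈ t
      · rw [ht c hc, mul_zero]
      · rw [hrow c (mem_compl.mpr hc), zero_mul]
    · rw [pow_succ, mul_apply]
      exact sum_eq_zero fun c _ => by rw [ht i hi, zero_mul]

theorem pow_card_eq_zero_of_forall_exists_zero_row [Semiring R] {M : Matrix n n R}
    (hM : ∀ s : Finset n, s.Nonempty → ∃ i ∈ s, ∀ j ∈ s, M i j = 0) :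
    M ^ Fintype.card n = 0 := by
  obtain ⟨t, ht, hzero⟩ := exists_card_eq_forall_mem_pow_apply_eq_zero hM le_rfl
  rw [card_eq_iff_eq_univ] at ht
  ext i j
  exact hzero i (ht ▸ mem_univ i) j

theorem eq_zero_of_isRoot_charpoly_of_isNilpotent [CommRing R] [IsReduced R] {B : Matrix n n R}
    (hB : IsNilpotent B) {μ : R} (hμ : B.charpoly.IsRoot μ) : μ = 0 := by
  have h := (isNilpotent_charpoly_sub_pow_of_isNilpotent hB).map (evalRingHom μ)
  rw [map_sub, coe_evalRingHom, hμ.eq_zero, zero_sub, isNilpotent_neg_iff, eval_pow, eval_X] at h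
  exact (IsNilpotent.of_pow h).eq_zero

theorem exists_pow_apply_ne_zero [Semiring R] [NoZeroDivisors R] [Subsingleton (AddUnits R)]
    {M : Matrix n n R} {s : Finset n} (hM : ∀ i ∈ s, ∃ j ∈ s, M i j ≠ 0) (k : ℕ) :
    ∀ i ∈ s, ∃ j ∈ s, (M ^ k) i j ≠ 0 := by
  induction k with
  | zero =>
    intro i hi
    obtain ⟨j, -, hij⟩ := hM i hi
    have : Nontrivial R := ⟨⟨_, _, hij⟩⟩
    exact ⟨i, hi, by simp⟩
  | succ k ih =>
    intro i hi
    obtain ⟨c, hc, hic⟩ := hM i hi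
    obtain ⟨j, hj, hcj⟩ := ih c hc
    refine ⟨j, hj, ?_⟩
    rw [pow_succ', mul_apply, Ne, sum_eq_zero_iff]
    exact fun h => mul_ne_zero hic hcj (h c (mem_univ c))

end Matrix

theorem spectrum.exists_one_le_norm_of_forall_one_le_norm_pow {A : Type*} [NormedRing A]
    [NormedAlgebra ℂ A] [CompleteSpace A] {a : A} (h : ∀ k : ℕ, 1 ≤ ‖a ^ k‖) :
    ∃ μ ∈ spectrum ℂ a, 1 ≤ ‖μ‖ := by
  have : Nontrivial A := nontrivial_of_ne 1 0 fun h1 => absurd (h 0) (by simp [h1])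
  have hrad : 1 ≤ spectralRadius ℂ a := by
    refine ge_of_tendsto (spectrum.pow_nnnorm_pow_one_div_tendsto_nhds_spectralRadius a)
      (Filter.Eventually.of_forall fun k => ?_)
    calc (1 : ℝ≥0∞) = 1 ^ (1 / k : ℝ) := (ENNReal.one_rpow _).symm
      _ ≤ (‖a ^ k‖₊ : ℝ≥0∞) ^ (1 / k : ℝ) := by
        gcongr
        exact_mod_cast h k
  obtain ⟨μ, hμ, hμr⟩ := spectrum.exists_nnnorm_eq_spectralRadius_of_nonempty (spectrum.nonempty a)
  refine ⟨μ, hμ, ?_⟩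
  rw [← hμr] at hrad
  exact_mod_cast hrad

section LinftyOpNorm

attribute [local instance] Matrix.linftyOpSeminormedAddCommGroup

theorem Matrix.nnnorm_entry_le_linfty_opNNNorm {m n α : Type*} [Fintype m] [Fintype n]
    [SeminormedAddCommGroup α] (A : Matrix m n α) (i : m) (j : n) : ‖A i j‖₊ ≤ ‖A‖₊ := by
  rw [linfty_opNNNorm_def]
  exact (single_le_sum (fun _ _ => zero_le) (mem_univ j)).trans
    (le_sup (f := fun i => ∑ j, ‖A i j‖₊) (mem_univ i))

end LinftyOpNorm

section LinftyOpNormedAlgebra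

attribute [local instance] Matrix.linftyOpNormedRing Matrix.linftyOpNormedAlgebra

theorem Matrix.one_le_linfty_opNorm_map_natCast {n : Type*} [Fintype n] [DecidableEq n]
    {A : Matrix n n ℕ} (hA : A ≠ 0) : 1 ≤ ‖A.map (Nat.cast : ℕ → ℂ)‖ := by
  obtain ⟨i, j, hij⟩ : ∃ i j, A i j ≠ 0 := by
    by_contra! h
    exact hA (ext h)
  calc (1 : ℝ) ≤ A i j := by exact_mod_cast Nat.one_le_iff_ne_zero.mpr hij
    _ = ‖A.map (Nat.cast : ℕ → ℂ) i j‖ := by simp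
    _ ≤ ‖A.map (Nat.cast : ℕ → ℂ)‖ := nnnorm_entry_le_linfty_opNNNorm _ i j

theorem exists_isRoot_charpoly_one_le_norm_of_not_everyPrincipalSubmatrixHasZeroRow
    {n : Type*} [Fintype n] [DecidableEq n] {M : Matrix n n ℕ}
    (hM : ¬ EveryPrincipalSubmatrixHasZeroRow M) :
    ∃ μ : ℂ, (M.map (Nat.cast : ℕ → ℂ)).charpoly.IsRoot μ ∧ 1 ≤ ‖μ‖ := by
  simp only [EveryPrincipalSubmatrixHasZeroRow, not_forall, not_exists, not_and] at hM
  obtain ⟨s, ⟨i, hi⟩, hs⟩ := hM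
  have hpow (k : ℕ) : M ^ k ≠ 0 := fun h0 => by
    obtain ⟨j, -, hj⟩ := exists_pow_apply_ne_zero (by simpa using hs) k i hi
    simp [h0] at hj
  obtain ⟨μ, hμ, hμ1⟩ := spectrum.exists_one_le_norm_of_forall_one_le_norm_pow
    (a := M.map (Nat.cast : ℕ → ℂ)) fun k =>
      (map_pow (Nat.castRingHom ℂ).mapMatrix M k).symm ▸ one_le_linfty_opNorm_map_natCast (hpow k)
  exact ⟨μ, mem_spectrum_iff_isRoot_charpoly.mp hμ, hμ1⟩

end LinftyOpNormedAlgebra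

theorem EveryPrincipalSubmatrixHasZeroRow.eq_zero_of_isRoot_charpoly {n R : Type*} [Fintype n]
    [DecidableEq n] [CommRing R] [IsReduced R] {M : Matrix n n ℕ}
    (hM : EveryPrincipalSubmatrixHasZeroRow M) {μ : R}
    (hμ : (M.map (Nat.cast : ℕ → R)).charpoly.IsRoot μ) : μ = 0 :=
  eq_zero_of_isRoot_charpoly_of_isNilpotent
    (IsNilpotent.map ⟨_, pow_card_eq_zero_of_forall_exists_zero_row hM⟩
      (Nat.castRingHom R).mapMatrix) hμ

theorem stmt_17_general {n : Type*} [Fintype n] [DecidableEq n] (M : Matrix n n ℕ) :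
    ((EveryPrincipalSubmatrixHasZeroRow M →
        ∀ μ : ℂ, (M.map (Nat.cast : ℕ → ℂ)).charpoly.IsRoot μ → μ = 0) ∧
      (¬ EveryPrincipalSubmatrixHasZeroRow M →
        ∃ μ : ℂ, (M.map (Nat.cast : ℕ → ℂ)).charpoly.IsRoot μ ∧ 1 ≤ ‖μ‖)) ∧
    ((EveryPrincipalSubmatrixHasZeroCol M →
        ∀ μ : ℂ, (M.map (Nat.cast : ℕ → ℂ)).charpoly.IsRoot μ → μ = 0) ∧
      (¬ EveryPrincipalSubmatrixHasZeroCol M →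
        ∃ μ : ℂ, (M.map (Nat.cast : ℕ → ℂ)).charpoly.IsRoot μ ∧ 1 ≤ ‖μ‖)) := by
  have hT : (Mᵀ.map (Nat.cast : ℕ → ℂ)).charpoly = (M.map (Nat.cast : ℕ → ℂ)).charpoly := by
    rw [transpose_map, charpoly_transpose]
  refine ⟨⟨fun h _ => h.eq_zero_of_isRoot_charpoly,
    exists_isRoot_charpoly_one_le_norm_of_not_everyPrincipalSubmatrixHasZeroRow⟩, ?_, ?_⟩
  · exact fun (h : EveryPrincipalSubmatrixHasZeroRow Mᵀ) _ hμ =>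
      h.eq_zero_of_isRoot_charpoly (hT ▸ hμ)
  · exact fun (h : ¬ EveryPrincipalSubmatrixHasZeroRow Mᵀ) =>
      hT ▸ exists_isRoot_charpoly_one_le_norm_of_not_everyPrincipalSubmatrixHasZeroRow h

/-- For a square matrix of nonnegative integers: if every principal submatrix has a zero
    row then the spectral radius is 0 (all eigenvalues vanish); otherwise some eigenvalue
    has modulus at least 1. The same holds with "row" replaced by "column". -/
theorem stmt_17 {n : Type*} [Fintype n] [DecidableEq n] [Nonempty n] (M : Matrix n n ℕ) :
    ((EveryPrincipalSubmatrixHasZeroRow M →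
        ∀ μ : ℂ, (M.map (Nat.cast : ℕ → ℂ)).charpoly.IsRoot μ → μ = 0) ∧
      (¬ EveryPrincipalSubmatrixHasZeroRow M →
        ∃ μ : ℂ, (M.map (Nat.cast : ℕ → ℂ)).charpoly.IsRoot μ ∧ 1 ≤ ‖μ‖)) ∧
    ((EveryPrincipalSubmatrixHasZeroCol M →
        ∀ μ : ℂ, (M.map (Nat.cast : ℕ → ℂ)).charpoly.IsRoot μ → μ = 0) ∧
      (¬ EveryPrincipalSubmatrixHasZeroCol M →
        ∃ μ : ℂ, (M.map (Nat.cast : ℕ → ℂ)).charpoly.IsRoot μ ∧ 1 ≤ ‖μ‖)) :=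
  stmt_17_general M
end

section
/- Under the S(2) payoff-sampling dynamic for the prisoner's dilemma with l < 1 < g, the dynamic is ṗ = (1−p)² − (1−p)⁴ − p, which has exactly two rest points in [0,1]: p = 0 and a unique p* ∈ (0,1) with p* ∈ (0.24, 0.25); moreover 0 is unstable (the right derivative of the vector field at 0 is positive). -/
/-- The S(2) vector field for the PD with l < 1 < g: ṗ = (1-p)² - (1-p)⁴ - p. -/
noncomputable def F18 (p : ℝ) : ℝ := (1-p)^2 - (1-p)^4 - p

/-!
Factoring out the rest point `0` leaves `F18 p = p * (1 - 5p + 4p² - p³)`. The cubic factor is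
strictly decreasing on `[0, 1]`, so it has at most one root there, and it changes sign on
`[0.24, 0.25]`. The slope of `F18` at `0` is `1`.
-/

open Set

lemma F18_eq_mul_cubic (p : ℝ) : F18 p = p * (1 - 5*p + 4*p^2 - p^3) := by
  unfold F18; ring

lemma strictAntiOn_cubic : StrictAntiOn (fun p : ℝ => 1 - 5*p + 4*p^2 - p^3) (Icc 0 1) := by
  intro a ⟨ha0, ha1⟩ b ⟨hb0, hb1⟩ hab
  have hpos : 0 < 5 - 4*(a + b) + (a^2 + a*b + b^2) := by nlinarith
  have key : (1 - 5*a + 4*a^2 - a^3) - (1 - 5*b + 4*b^2 - b^3)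
      = (b - a) * (5 - 4*(a + b) + (a^2 + a*b + b^2)) := by ring
  dsimp only
  linarith [mul_pos (sub_pos.2 hab) hpos]

lemma F18_eq_zero_iff {p : ℝ} : F18 p = 0 ↔ p = 0 ∨ 1 - 5*p + 4*p^2 - p^3 = 0 := by
  rw [F18_eq_mul_cubic, mul_eq_zero]

lemma exists_F18_eq_zero_mem_Ioo : ∃ p ∈ Ioo (0.24 : ℝ) 0.25, F18 p = 0 := by
  have hcont : ContinuousOn F18 (Icc 0.24 0.25) := by unfold F18; fun_prop
  have hsign : (0 : ℝ) ∈ Ioo (F18 0.25) (F18 0.24) := by constructor <;> (unfold F18; norm_num)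
  exact intermediate_value_Ioo' (by norm_num) hcont hsign

lemma eq_zero_or_eq_of_F18_eq_zero {p q : ℝ} (hp : p ∈ Icc 0 1) (hp0 : p ≠ 0) (hFp : F18 p = 0)
    (hq : q ∈ Icc 0 1) (hFq : F18 q = 0) : q = 0 ∨ q = p := by
  rcases F18_eq_zero_iff.1 hFq with hq0 | hcq
  · exact Or.inl hq0
  · have hcp := (F18_eq_zero_iff.1 hFp).resolve_left hp0
    exact Or.inr (strictAntiOn_cubic.injOn hq hp (hcq.trans hcp.symm))

lemma hasDerivAt_F18 (p : ℝ) : HasDerivAt F18 (4*(1-p)^3 - 2*(1-p) - 1) p := by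
  have hu : HasDerivAt (fun x : ℝ => 1 - x) (-1) p := by
    simpa using (hasDerivAt_id p).const_sub 1
  refine (((hu.pow 2).sub (hu.pow 4)).sub (hasDerivAt_id p)).congr_deriv ?_
  push_cast
  ring

theorem stmt_18_general :
    (∀ p : ℝ, (1 - (1-p)^2) * (1-p)^2 - p = F18 p) ∧
    F18 0 = 0 ∧
    (∃ p' ∈ Set.Ioo (0:ℝ) 1, F18 p' = 0 ∧ 0.24 < p' ∧ p' < 0.25 ∧
      ∀ q ∈ Set.Icc (0:ℝ) 1, F18 q = 0 → q = 0 ∨ q = p') ∧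
    (∃ d : ℝ, 0 < d ∧ HasDerivAt F18 d 0) := by
  refine ⟨fun p => by unfold F18; ring, by unfold F18; norm_num, ?_, ⟨1, one_pos, ?_⟩⟩
  · obtain ⟨p', ⟨hlo, hhi⟩, hFp'⟩ := exists_F18_eq_zero_mem_Ioo
    have hp' : p' ∈ Ioo (0 : ℝ) 1 := ⟨by linarith, by linarith⟩
    exact ⟨p', hp', hFp', hlo, hhi, fun q hq hFq =>
      eq_zero_or_eq_of_F18_eq_zero (Ioo_subset_Icc_self hp') hp'.1.ne' hFp' hq hFq⟩
  · convert hasDerivAt_F18 0 using 1; norm_num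

theorem stmt_18 (g l : ℝ) (hl : l < 1) (hg : 1 < g) :
    (∀ p : ℝ, (1 - (1-p)^2) * (1-p)^2 - p = F18 p) ∧
    F18 0 = 0 ∧
    (∃ p' ∈ Set.Ioo (0:ℝ) 1, F18 p' = 0 ∧ 0.24 < p' ∧ p' < 0.25 ∧
      ∀ q ∈ Set.Icc (0:ℝ) 1, F18 q = 0 → q = 0 ∨ q = p') ∧
    (∃ d : ℝ, 0 < d ∧ HasDerivAt F18 d 0) :=
  stmt_18_general
end
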